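/- Let x̄ ∈ F. Seq-CRCQ holds at x̄ if, and only if, for every tuple of unit vectors w̄ = [w̄_j]_{j∈I_0(x̄)} there exists a neighborhood V of (x̄, w̄) such that for every J_B ⊆ I_B(x̄) and J_−, J_+ ⊆ I_0(x̄): if D_{J_B,J_−,J_+}(x̄, w̄) is linearly dependent, then D_{J_B,J_−,J_+}(x, w) remains linearly dependent for every (x, w) ∈ V with w = [w_j]_{j∈I_0(x̄)} and ‖w_j‖ = 1 for every j ∈ J_− ∪ J_+. -/

import Mathlib

open Filter Topology

noncomputable section

/-- Euclidean space `ℝ^k`. -/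
abbrev Evec (k : ℕ) : Type := EuclideanSpace ℝ (Fin k)

/-- Membership of `y = (y₀, ŷ) ∈ ℝ × ℝ^p` in the second-order (Lorentz) cone `Λ_{1+p}`. -/
def inSOC {p : ℕ} (y : ℝ × Evec p) : Prop := ‖y.2‖ ≤ y.1

/-- Normalization `v / ‖v‖`. -/
def unitv {p : ℕ} (v : Evec p) : Evec p := ‖v‖⁻¹ • v

/-- The transposed Jacobian `Dg(x)ᵀ u` of `g = (g0, gh) : ℝ^n → ℝ × ℝ^p` at `x`,
applied to `u = (u₀, û) ∈ ℝ × ℝ^p`. -/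
def dgT {n p : ℕ} (g0 : Evec n → ℝ) (gh : Evec n → Evec p) (x : Evec n)
    (u : ℝ × Evec p) : Evec n :=
  u.1 • gradient g0 x + ∑ i, u.2 i • gradient (fun y => gh y i) x

/-- Euclidean inner product on `ℝ × ℝ^p`. -/
def pairInner {p : ℕ} (u v : ℝ × Evec p) : ℝ := u.1 * v.1 + (inner ℝ u.2 v.2 : ℝ)

/-- Squared Euclidean norm on `ℝ × ℝ^p`. -/
def pairSq {p : ℕ} (y : ℝ × Evec p) : ℝ := y.1 ^ 2 + ‖y.2‖ ^ 2

/-- The Euclidean orthogonal projection onto the second-order cone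
(expressed through the spectral decomposition). -/
def projSOC {p : ℕ} (y : ℝ × Evec p) : ℝ × Evec p :=
  ((max (y.1 - ‖y.2‖) 0 + max (y.1 + ‖y.2‖) 0) / 2,
    ((max (y.1 + ‖y.2‖) 0 - max (y.1 - ‖y.2‖) 0) / (2 * ‖y.2‖)) • y.2)

/-- `j ∈ I₀(x)`, i.e. `g_j(x) = 0`. -/
def memI0 {n q : ℕ} {m : Fin q → ℕ} (g0 : Fin q → Evec n → ℝ)
    (gh : (j : Fin q) → Evec n → Evec (m j)) (x : Evec n) (j : Fin q) : Prop :=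
  g0 j x = 0 ∧ gh j x = 0

/-- `j ∈ I_B(x)`, i.e. `g_j(x) ≠ 0` and `g_{j,0}(x) = ‖ĝ_j(x)‖`. -/
def memIB {n q : ℕ} {m : Fin q → ℕ} (g0 : Fin q → Evec n → ℝ)
    (gh : (j : Fin q) → Evec n → Evec (m j)) (x : Evec n) (j : Fin q) : Prop :=
  ¬ (g0 j x = 0 ∧ gh j x = 0) ∧ g0 j x = ‖gh j x‖

/-- The linear combination, with coefficients `η, a, b`, of the family
`D_{J_B,J_-,J_+}(x, w)`: the vectors `Dg_j(x)ᵀ(1, -ĝ_j(x)/‖ĝ_j(x)‖)` (coefficients `η j`),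
`Dg_j(x)ᵀ(1, -w j)` (coefficients `a j`) and `Dg_j(x)ᵀ(1, w j)` (coefficients `b j`). -/
def famComb {n q : ℕ} {m : Fin q → ℕ} (g0 : Fin q → Evec n → ℝ)
    (gh : (j : Fin q) → Evec n → Evec (m j)) (x : Evec n)
    (w : (j : Fin q) → Evec (m j)) (η a b : Fin q → ℝ) : Evec n :=
  ∑ j, (η j • dgT (g0 j) (gh j) x (1, -unitv (gh j x))
      + a j • dgT (g0 j) (gh j) x (1, -(w j))
      + b j • dgT (g0 j) (gh j) x (1, w j))

/-- The family `D_{J_B,J_-,J_+}(x, w)` is linearly dependent. -/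
def linDepD {n q : ℕ} {m : Fin q → ℕ} (g0 : Fin q → Evec n → ℝ)
    (gh : (j : Fin q) → Evec n → Evec (m j)) (JB Jm Jp : Fin q → Prop)
    (x : Evec n) (w : (j : Fin q) → Evec (m j)) : Prop :=
  ∃ η a b : Fin q → ℝ,
    (∀ j, ¬ JB j → η j = 0) ∧ (∀ j, ¬ Jm j → a j = 0) ∧ (∀ j, ¬ Jp j → b j = 0) ∧
    ¬ (∀ j, η j = 0 ∧ a j = 0 ∧ b j = 0) ∧
    famComb g0 gh x w η a b = 0

/-- The family `D_{J_B,J_-,J_+}(x, w)` is positively linearly dependent. -/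
def posLinDepD {n q : ℕ} {m : Fin q → ℕ} (g0 : Fin q → Evec n → ℝ)
    (gh : (j : Fin q) → Evec n → Evec (m j)) (JB Jm Jp : Fin q → Prop)
    (x : Evec n) (w : (j : Fin q) → Evec (m j)) : Prop :=
  ∃ η a b : Fin q → ℝ,
    (∀ j, 0 ≤ η j) ∧ (∀ j, 0 ≤ a j) ∧ (∀ j, 0 ≤ b j) ∧
    (∀ j, ¬ JB j → η j = 0) ∧ (∀ j, ¬ Jm j → a j = 0) ∧ (∀ j, ¬ Jp j → b j = 0) ∧
    ¬ (∀ j, η j = 0 ∧ a j = 0 ∧ b j = 0) ∧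
    famComb g0 gh x w η a b = 0

/-- The full family `{Dg_j(x)ᵀ u₁(g_j(x))}_{j ∈ I_B(x)} ∪
`{Dg_j(x)ᵀ(1,-w j), Dg_j(x)ᵀ(1,w j)}_{j ∈ I₀(x)}` is linearly independent. -/
def famLinIndep {n q : ℕ} {m : Fin q → ℕ} (g0 : Fin q → Evec n → ℝ)
    (gh : (j : Fin q) → Evec n → Evec (m j)) (x : Evec n)
    (w : (j : Fin q) → Evec (m j)) : Prop :=
  ∀ η a b : Fin q → ℝ,
    (∀ j, ¬ memIB g0 gh x j → η j = 0) →
    (∀ j, ¬ memI0 g0 gh x j → a j = 0 ∧ b j = 0) →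
    famComb g0 gh x w η a b = 0 →
    ∀ j, η j = 0 ∧ a j = 0 ∧ b j = 0

/-- The full family is positively linearly independent. -/
def famPosLinIndep {n q : ℕ} {m : Fin q → ℕ} (g0 : Fin q → Evec n → ℝ)
    (gh : (j : Fin q) → Evec n → Evec (m j)) (x : Evec n)
    (w : (j : Fin q) → Evec (m j)) : Prop :=
  ∀ η a b : Fin q → ℝ,
    (∀ j, 0 ≤ η j) → (∀ j, 0 ≤ a j) → (∀ j, 0 ≤ b j) →
    (∀ j, ¬ memIB g0 gh x j → η j = 0) →
    (∀ j, ¬ memI0 g0 gh x j → a j = 0 ∧ b j = 0) →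
    famComb g0 gh x w η a b = 0 →
    ∀ j, η j = 0 ∧ a j = 0 ∧ b j = 0

/-- An admissible choice, along the (perturbed) sequence `x k + Δ`, of eigenvector
parameters `w k j` (for `k ∈ I`, `j ∈ I₀(xb)`) together with their limits `wb j`. -/
def eigParams {n q : ℕ} {m : Fin q → ℕ} (g0 : Fin q → Evec n → ℝ)
    (gh : (j : Fin q) → Evec n → Evec (m j)) (xb : Evec n) (x : ℕ → Evec n)
    (Δ : ℕ → (j : Fin q) → ℝ × Evec (m j)) (I : Set ℕ)
    (w : ℕ → (j : Fin q) → Evec (m j)) (wb : (j : Fin q) → Evec (m j)) : Prop :=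
  (∀ k ∈ I, ∀ j, memI0 g0 gh xb j → ‖w k j‖ = 1 ∧
      (gh j (x k) + (Δ k j).2 ≠ 0 → w k j = unitv (gh j (x k) + (Δ k j).2))) ∧
  (∀ j, memI0 g0 gh xb j → ‖wb j‖ = 1 ∧
      Tendsto (fun k => w k j) (atTop ⊓ 𝓟 I) (𝓝 (wb j)))

/-- Weak-nondegeneracy at `xb`. -/
def weakNondeg {n q : ℕ} {m : Fin q → ℕ} (g0 : Fin q → Evec n → ℝ)
    (gh : (j : Fin q) → Evec n → Evec (m j)) (xb : Evec n) : Prop :=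
  ∀ x : ℕ → Evec n, Tendsto x atTop (𝓝 xb) →
    ∃ (I : Set ℕ) (w : ℕ → (j : Fin q) → Evec (m j)) (wb : (j : Fin q) → Evec (m j)),
      I.Infinite ∧ eigParams g0 gh xb x (fun _ _ => 0) I w wb ∧
      famLinIndep g0 gh xb wb

/-- Weak-Robinson's CQ at `xb`. -/
def weakRobinson {n q : ℕ} {m : Fin q → ℕ} (g0 : Fin q → Evec n → ℝ)
    (gh : (j : Fin q) → Evec n → Evec (m j)) (xb : Evec n) : Prop :=
  ∀ x : ℕ → Evec n, Tendsto x atTop (𝓝 xb) →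
    ∃ (I : Set ℕ) (w : ℕ → (j : Fin q) → Evec (m j)) (wb : (j : Fin q) → Evec (m j)),
      I.Infinite ∧ eigParams g0 gh xb x (fun _ _ => 0) I w wb ∧
      famPosLinIndep g0 gh xb wb

/-- Weak-CRCQ at `xb`. -/
def weakCRCQ {n q : ℕ} {m : Fin q → ℕ} (g0 : Fin q → Evec n → ℝ)
    (gh : (j : Fin q) → Evec n → Evec (m j)) (xb : Evec n) : Prop :=
  ∀ x : ℕ → Evec n, Tendsto x atTop (𝓝 xb) →
    ∃ (I : Set ℕ) (w : ℕ → (j : Fin q) → Evec (m j)) (wb : (j : Fin q) → Evec (m j)),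
      I.Infinite ∧ eigParams g0 gh xb x (fun _ _ => 0) I w wb ∧
      ∀ JB Jm Jp : Fin q → Prop,
        (∀ j, JB j → memIB g0 gh xb j) → (∀ j, Jm j → memI0 g0 gh xb j) →
        (∀ j, Jp j → memI0 g0 gh xb j) →
        linDepD g0 gh JB Jm Jp xb wb →
        ∀ᶠ k in atTop ⊓ 𝓟 I, linDepD g0 gh JB Jm Jp (x k) (w k)

/-- Weak-CPLD at `xb`. -/
def weakCPLD {n q : ℕ} {m : Fin q → ℕ} (g0 : Fin q → Evec n → ℝ)
    (gh : (j : Fin q) → Evec n → Evec (m j)) (xb : Evec n) : Prop :=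
  ∀ x : ℕ → Evec n, Tendsto x atTop (𝓝 xb) →
    ∃ (I : Set ℕ) (w : ℕ → (j : Fin q) → Evec (m j)) (wb : (j : Fin q) → Evec (m j)),
      I.Infinite ∧ eigParams g0 gh xb x (fun _ _ => 0) I w wb ∧
      ∀ JB Jm Jp : Fin q → Prop,
        (∀ j, JB j → memIB g0 gh xb j) → (∀ j, Jm j → memI0 g0 gh xb j) →
        (∀ j, Jp j → memI0 g0 gh xb j) →
        posLinDepD g0 gh JB Jm Jp xb wb →
        ∀ᶠ k in atTop ⊓ 𝓟 I, linDepD g0 gh JB Jm Jp (x k) (w k)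

/-- Seq-CRCQ at `xb`. -/
def seqCRCQ {n q : ℕ} {m : Fin q → ℕ} (g0 : Fin q → Evec n → ℝ)
    (gh : (j : Fin q) → Evec n → Evec (m j)) (xb : Evec n) : Prop :=
  ∀ (x : ℕ → Evec n) (Δ : ℕ → (j : Fin q) → ℝ × Evec (m j)),
    Tendsto x atTop (𝓝 xb) →
    (∀ j, memI0 g0 gh xb j ∨ memIB g0 gh xb j → Tendsto (fun k => Δ k j) atTop (𝓝 0)) →
    ∃ (I : Set ℕ) (w : ℕ → (j : Fin q) → Evec (m j)) (wb : (j : Fin q) → Evec (m j)),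
      I.Infinite ∧ eigParams g0 gh xb x Δ I w wb ∧
      ∀ JB Jm Jp : Fin q → Prop,
        (∀ j, JB j → memIB g0 gh xb j) → (∀ j, Jm j → memI0 g0 gh xb j) →
        (∀ j, Jp j → memI0 g0 gh xb j) →
        linDepD g0 gh JB Jm Jp xb wb →
        ∀ᶠ k in atTop ⊓ 𝓟 I, linDepD g0 gh JB Jm Jp (x k) (w k)

/-- Seq-CPLD at `xb`. -/
def seqCPLD {n q : ℕ} {m : Fin q → ℕ} (g0 : Fin q → Evec n → ℝ)
    (gh : (j : Fin q) → Evec n → Evec (m j)) (xb : Evec n) : Prop :=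
  ∀ (x : ℕ → Evec n) (Δ : ℕ → (j : Fin q) → ℝ × Evec (m j)),
    Tendsto x atTop (𝓝 xb) →
    (∀ j, memI0 g0 gh xb j ∨ memIB g0 gh xb j → Tendsto (fun k => Δ k j) atTop (𝓝 0)) →
    ∃ (I : Set ℕ) (w : ℕ → (j : Fin q) → Evec (m j)) (wb : (j : Fin q) → Evec (m j)),
      I.Infinite ∧ eigParams g0 gh xb x Δ I w wb ∧
      ∀ JB Jm Jp : Fin q → Prop,
        (∀ j, JB j → memIB g0 gh xb j) → (∀ j, Jm j → memI0 g0 gh xb j) →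
        (∀ j, Jp j → memI0 g0 gh xb j) →
        posLinDepD g0 gh JB Jm Jp xb wb →
        ∀ᶠ k in atTop ⊓ 𝓟 I, linDepD g0 gh JB Jm Jp (x k) (w k)

/-- The linear combination appearing in the definitions of nondegeneracy and
Robinson's CQ: `Σ_{j} (η j • Dg_j(x)ᵀ(g_{j,0}(x), -ĝ_j(x)) + Dg_j(x)ᵀ (y j))`. -/
def ndgComb {n q : ℕ} {m : Fin q → ℕ} (g0 : Fin q → Evec n → ℝ)
    (gh : (j : Fin q) → Evec n → Evec (m j)) (x : Evec n)
    (η : Fin q → ℝ) (y : (j : Fin q) → ℝ × Evec (m j)) : Evec n :=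
  ∑ j, (η j • dgT (g0 j) (gh j) x (g0 j x, -(gh j x)) + dgT (g0 j) (gh j) x (y j))

/-- Nondegeneracy at `xb`. -/
def Nondegenerate {n q : ℕ} {m : Fin q → ℕ} (g0 : Fin q → Evec n → ℝ)
    (gh : (j : Fin q) → Evec n → Evec (m j)) (xb : Evec n) : Prop :=
  ∀ (η : Fin q → ℝ) (y : (j : Fin q) → ℝ × Evec (m j)),
    (∀ j, ¬ memIB g0 gh xb j → η j = 0) →
    (∀ j, ¬ memI0 g0 gh xb j → y j = 0) →
    ndgComb g0 gh xb η y = 0 →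
    (∀ j, η j = 0) ∧ (∀ j, y j = 0)

/-- Robinson's CQ at `xb`. -/
def RobinsonCQ {n q : ℕ} {m : Fin q → ℕ} (g0 : Fin q → Evec n → ℝ)
    (gh : (j : Fin q) → Evec n → Evec (m j)) (xb : Evec n) : Prop :=
  ∀ (η : Fin q → ℝ) (y : (j : Fin q) → ℝ × Evec (m j)),
    (∀ j, 0 ≤ η j) → (∀ j, inSOC (y j)) →
    (∀ j, ¬ memIB g0 gh xb j → η j = 0) →
    (∀ j, ¬ memI0 g0 gh xb j → y j = 0) →
    ndgComb g0 gh xb η y = 0 →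
    (∀ j, η j = 0) ∧ (∀ j, y j = 0)

/-- The KKT conditions at `xb` for objective `f`. -/
def isKKT {n q : ℕ} {m : Fin q → ℕ} (f : Evec n → ℝ) (g0 : Fin q → Evec n → ℝ)
    (gh : (j : Fin q) → Evec n → Evec (m j)) (xb : Evec n) : Prop :=
  ∃ μ : (j : Fin q) → ℝ × Evec (m j),
    (∀ j, inSOC (μ j)) ∧
    gradient f xb = ∑ j, dgT (g0 j) (gh j) xb (μ j) ∧
    ∀ j, pairInner (μ j) (g0 j xb, gh j xb) = 0

/-- The metric subregularity CQ (MSCQ) at `xb`, with Euclidean distances. -/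
def MSCQat {n q : ℕ} {m : Fin q → ℕ} (g0 : Fin q → Evec n → ℝ)
    (gh : (j : Fin q) → Evec n → Evec (m j)) (xb : Evec n) : Prop :=
  ∃ γ > (0:ℝ), ∃ ε > (0:ℝ), ∀ x : Evec n, ‖x - xb‖ < ε →
    Metric.infDist x {z : Evec n | ∀ j, ‖gh j z‖ ≤ g0 j z} ≤
      γ * sInf {d : ℝ | ∃ z : (j : Fin q) → ℝ × Evec (m j),
        (∀ j, inSOC (z j)) ∧
        d = Real.sqrt (∑ j, ((g0 j x - (z j).1) ^ 2 + ‖gh j x - (z j).2‖ ^ 2))}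


lemma norm_unitv {p : ℕ} {v : Evec p} (hv : v ≠ 0) : ‖unitv v‖ = 1 := by
  rw [unitv, norm_smul, norm_inv, norm_norm, inv_mul_cancel₀ (norm_ne_zero_iff.2 hv)]

lemma unitv_smul_unit {p : ℕ} {t : ℝ} (ht : 0 < t) {u : Evec p} (hu : ‖u‖ = 1) :
    unitv (t • u) = u := by
  rw [unitv, norm_smul, hu, Real.norm_eq_abs, abs_of_pos ht, mul_one, smul_smul,
    inv_mul_cancel₀ ht.ne', one_smul]

lemma tendsto_inf_principal_range {α : Type*} [TopologicalSpace α] {f : ℕ → α} {φ : ℕ → ℕ}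
    (hφ : StrictMono φ) {a : α} (h : Tendsto (f ∘ φ) atTop (𝓝 a)) :
    Tendsto f (atTop ⊓ 𝓟 (Set.range φ)) (𝓝 a) := by
  rw [tendsto_def]
  intro U hU
  have h2 := (tendsto_def.mp h) U hU
  rw [mem_atTop_sets] at h2
  obtain ⟨M, hM⟩ := h2
  rw [mem_inf_principal, mem_atTop_sets]
  refine ⟨φ M, fun k hk hkI => ?_⟩
  obtain ⟨i, rfl⟩ := hkI
  exact hM i (hφ.le_iff_le.mp hk)

lemma neBot_atTop_inf {I : Set ℕ} (hI : I.Infinite) : (atTop ⊓ 𝓟 I).NeBot := by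
  rw [inf_principal_neBot_iff]
  intro U hU
  rw [mem_atTop_sets] at hU
  obtain ⟨N, hN⟩ := hU
  obtain ⟨b, hb, hb2⟩ := hI.exists_gt N
  exact ⟨b, hN b hb2.le, hb⟩

lemma famComb_congr {n q : ℕ} {m : Fin q → ℕ} {g0 : Fin q → Evec n → ℝ}
    {gh : (j : Fin q) → Evec n → Evec (m j)} {x : Evec n}
    {w w' : (j : Fin q) → Evec (m j)} {η a b : Fin q → ℝ}
    (h : ∀ j, a j ≠ 0 ∨ b j ≠ 0 → w j = w' j) :
    famComb g0 gh x w η a b = famComb g0 gh x w' η a b := by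
  unfold famComb
  refine Finset.sum_congr rfl fun j _ => ?_
  by_cases ha : a j = 0
  · by_cases hb : b j = 0
    · simp [ha, hb]
    · rw [h j (Or.inr hb)]
  · rw [h j (Or.inl ha)]

lemma linDepD_congr {n q : ℕ} {m : Fin q → ℕ} {g0 : Fin q → Evec n → ℝ}
    {gh : (j : Fin q) → Evec n → Evec (m j)} {JB Jm Jp : Fin q → Prop} {x : Evec n}
    {w w' : (j : Fin q) → Evec (m j)} (h : ∀ j, Jm j ∨ Jp j → w j = w' j) :
    linDepD g0 gh JB Jm Jp x w ↔ linDepD g0 gh JB Jm Jp x w' := by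
  constructor
  all_goals
    rintro ⟨η, a, b, hη, ha, hb, hnz, hc⟩
    refine ⟨η, a, b, hη, ha, hb, hnz, ?_⟩
    have h' : ∀ j, a j ≠ 0 ∨ b j ≠ 0 → w j = w' j := fun j hj => by
      refine h j (hj.imp (fun h1 => ?_) (fun h2 => ?_))
      · by_contra hJ; exact h1 (ha j hJ)
      · by_contra hJ; exact h2 (hb j hJ)
  · rw [← famComb_congr h', hc]
  · rw [famComb_congr h', hc]

/-- Seq-CRCQ holds at `xb ∈ F` iff for every tuple of unit vectors
`wb = [wb j]_{j ∈ I₀(xb)}` there is a neighborhood `V` of `(xb, wb)` such that for every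
`J_B ⊆ I_B(xb)` and `J_-, J_+ ⊆ I₀(xb)`: if `D_{J_B,J_-,J_+}(xb, wb)` is linearly
dependent, then `D_{J_B,J_-,J_+}(x, w)` remains linearly dependent for every `(x, w) ∈ V`
with `‖w j‖ = 1` for every `j ∈ J_- ∪ J_+`. -/
theorem stmt11 {n q : ℕ} (m : Fin q → ℕ) (hm : ∀ j, 1 ≤ m j)
    (f : Evec n → ℝ) (hf : ContDiff ℝ 1 f)
    (g0 : Fin q → Evec n → ℝ) (gh : (j : Fin q) → Evec n → Evec (m j))
    (hg : ∀ j, ContDiff ℝ 1 fun x => (g0 j x, gh j x))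
    (xb : Evec n) (hxb : ∀ j, ‖gh j xb‖ ≤ g0 j xb) :
    seqCRCQ g0 gh xb ↔
      ∀ wb : (j : Fin q) → Evec (m j), (∀ j, memI0 g0 gh xb j → ‖wb j‖ = 1) →
        ∃ V ∈ 𝓝 ((xb, wb) : Evec n × ((j : Fin q) → Evec (m j))),
          ∀ JB Jm Jp : Fin q → Prop,
            (∀ j, JB j → memIB g0 gh xb j) → (∀ j, Jm j → memI0 g0 gh xb j) →
            (∀ j, Jp j → memI0 g0 gh xb j) →
            linDepD g0 gh JB Jm Jp xb wb →
            ∀ z ∈ V, (∀ j, (Jm j ∨ Jp j) → ‖z.2 j‖ = 1) →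
              linDepD g0 gh JB Jm Jp z.1 z.2 := by
  classical
  constructor
  · intro hseq wb hwb
    by_contra hcon
    push_neg at hcon
    have H : ∀ k : ℕ, ∃ (JB Jm Jp : Fin q → Prop)
        (z : Evec n × ((j : Fin q) → Evec (m j))),
        (∀ j, JB j → memIB g0 gh xb j) ∧ (∀ j, Jm j → memI0 g0 gh xb j) ∧
        (∀ j, Jp j → memI0 g0 gh xb j) ∧ linDepD g0 gh JB Jm Jp xb wb ∧
        z ∈ Metric.ball ((xb, wb) : Evec n × ((j : Fin q) → Evec (m j))) (1/(k+1)) ∧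
        (∀ j, (Jm j ∨ Jp j) → ‖z.2 j‖ = 1) ∧ ¬ linDepD g0 gh JB Jm Jp z.1 z.2 := by
      intro k
      obtain ⟨JB, Jm, Jp, h1, h2, h3, h4, z, hz1, hz2, hz3⟩ :=
        hcon (Metric.ball _ (1/(k+1))) (Metric.ball_mem_nhds _ (by positivity))
      exact ⟨JB, Jm, Jp, z, h1, h2, h3, h4, hz1, hz2, hz3⟩
    choose JB Jm Jp z h1 h2 h3 h4 hz h5 h6 using H
    -- pigeonhole on the (finitely many) index triples
    set Fn : ℕ → Finset (Fin q) × Finset (Fin q) × Finset (Fin q) := fun k =>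
      (Finset.univ.filter (fun j => JB k j), Finset.univ.filter (fun j => Jm k j),
        Finset.univ.filter (fun j => Jp k j)) with hFn
    obtain ⟨⟨B, M, P⟩, hfib⟩ := Finite.exists_infinite_fiber Fn
    have hS : (Fn ⁻¹' {(B, M, P)} : Set ℕ).Infinite := Set.infinite_coe_iff.mp hfib
    set S : Set ℕ := Fn ⁻¹' {(B, M, P)} with hSdef
    have hJBk : ∀ k ∈ S, JB k = fun j => j ∈ B := by
      intro k hk
      have hk' : Fn k = (B, M, P) := hk
      funext j
      refine propext ?_
      have : (Finset.univ.filter (fun j => JB k j)) = B := congrArg Prod.fst hk'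
      rw [← this]; simp
    have hJmk : ∀ k ∈ S, Jm k = fun j => j ∈ M := by
      intro k hk
      have hk' : Fn k = (B, M, P) := hk
      funext j
      refine propext ?_
      have : (Finset.univ.filter (fun j => Jm k j)) = M := congrArg (fun p => p.2.1) hk'
      rw [← this]; simp
    have hJpk : ∀ k ∈ S, Jp k = fun j => j ∈ P := by
      intro k hk
      have hk' : Fn k = (B, M, P) := hk
      funext j
      refine propext ?_
      have : (Finset.univ.filter (fun j => Jp k j)) = P := congrArg (fun p => p.2.2) hk'
      rw [← this]; simp
    have hSinf : {k | k ∈ S}.Infinite := hS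
    set ψ : ℕ → ℕ := Nat.nth (· ∈ S) with hψdef
    have hψmem : ∀ i, ψ i ∈ S := Nat.nth_mem_of_infinite hSinf
    have hψmono : StrictMono ψ := Nat.nth_strictMono hSinf
    set x' : ℕ → Evec n := fun i => (z (ψ i)).1 with hx'def
    set w'' : ℕ → (j : Fin q) → Evec (m j) := fun i => (z (ψ i)).2 with hw''def
    have hzd : ∀ i : ℕ, dist (z (ψ i)) ((xb, wb) : Evec n × ((j : Fin q) → Evec (m j)))
        < 1/(i+1) := by
      intro i
      have h0 := hz (ψ i)
      rw [Metric.mem_ball] at h0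
      refine lt_of_lt_of_le h0 ?_
      have : ((i : ℝ) + 1) ≤ (ψ i : ℝ) + 1 := by
        have := hψmono.le_apply (x := i)
        push_cast
        exact_mod_cast Nat.add_le_add_right this 1
      exact one_div_le_one_div_of_le (by positivity) this
    have hdistz : Tendsto (fun i => dist (z (ψ i))
        ((xb, wb) : Evec n × ((j : Fin q) → Evec (m j)))) atTop (𝓝 0) := by
      refine squeeze_zero (fun i => dist_nonneg) (fun i => (hzd i).le) ?_
      exact tendsto_one_div_add_atTop_nhds_zero_nat
    have hx' : Tendsto x' atTop (𝓝 xb) := by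
      rw [tendsto_iff_dist_tendsto_zero]
      refine squeeze_zero (fun i => dist_nonneg) (fun i => ?_) hdistz
      rw [Prod.dist_eq]
      exact le_max_left _ _
    have hw''j : ∀ j, Tendsto (fun i => w'' i j) atTop (𝓝 (wb j)) := by
      intro j
      rw [tendsto_iff_dist_tendsto_zero]
      refine squeeze_zero (fun i => dist_nonneg) (fun i => ?_) hdistz
      refine le_trans (dist_le_pi_dist _ _ j) ?_
      rw [Prod.dist_eq]
      exact le_max_right _ _
    set u : ℕ → (j : Fin q) → Evec (m j) := fun i j =>
      if ‖w'' i j‖ = 1 then w'' i j else wb j with hudef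
    have hu1 : ∀ i j, memI0 g0 gh xb j → ‖u i j‖ = 1 := by
      intro i j hj
      by_cases h : ‖w'' i j‖ = 1
      · simp only [hudef, if_pos h]; exact h
      · simp only [hudef, if_neg h]; exact hwb j hj
    have huconv : ∀ j, Tendsto (fun i => u i j) atTop (𝓝 (wb j)) := by
      intro j
      rw [tendsto_iff_dist_tendsto_zero]
      refine squeeze_zero (fun i => dist_nonneg) (fun i => ?_)
        ((tendsto_iff_dist_tendsto_zero.mp (hw''j j)))
      by_cases h : ‖w'' i j‖ = 1
      · simp only [hudef, if_pos h]; exact le_refl _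
      · simp only [hudef, if_neg h, dist_self]; exact dist_nonneg
    set Δ' : ℕ → (j : Fin q) → ℝ × Evec (m j) := fun i j =>
      if memI0 g0 gh xb j then ((0 : ℝ), ((i : ℝ)+1)⁻¹ • u i j - gh j (x' i)) else 0 with hΔ'def
    have hghc : ∀ j, Continuous (gh j) := fun j => continuous_snd.comp (hg j).continuous
    have htinv : Tendsto (fun i : ℕ => ((i : ℝ)+1)⁻¹) atTop (𝓝 0) := by
      simpa [one_div] using (tendsto_one_div_add_atTop_nhds_zero_nat : Tendsto (fun n : ℕ => 1 / ((n : ℝ) + 1)) atTop (𝓝 0))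
    have hΔ' : ∀ j, memI0 g0 gh xb j ∨ memIB g0 gh xb j →
        Tendsto (fun i => Δ' i j) atTop (𝓝 0) := by
      intro j _
      by_cases hj : memI0 g0 gh xb j
      · simp only [hΔ'def, if_pos hj]
        have t2 : Tendsto (fun i => gh j (x' i)) atTop (𝓝 (gh j xb)) :=
          ((hghc j).continuousAt.tendsto).comp hx'
        rw [hj.2] at t2
        have t3 : Tendsto (fun i : ℕ => ((i : ℝ)+1)⁻¹ • u i j - gh j (x' i)) atTop
            (𝓝 (0 : Evec (m j))) := by
          have := (htinv.smul (huconv j)).sub t2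
          simpa using this
        exact (tendsto_const_nhds : Tendsto (fun _ : ℕ => (0:ℝ)) atTop (𝓝 0)).prodMk_nhds t3
      · simp only [hΔ'def, if_neg hj]
        exact tendsto_const_nhds
    obtain ⟨I, w, wb', hI, ⟨hw1, hw2⟩, htrans⟩ := hseq x' Δ' hx' hΔ'
    haveI := neBot_atTop_inf hI
    have hforce : ∀ k ∈ I, ∀ j, memI0 g0 gh xb j → w k j = u k j := by
      intro k hk j hj
      have hpos : (0:ℝ) < ((k : ℝ)+1)⁻¹ := by positivity
      have hsum : gh j (x' k) + (Δ' k j).2 = ((k : ℝ)+1)⁻¹ • u k j := by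
        simp only [hΔ'def, if_pos hj]
        exact add_sub_cancel _ _
      have hune : u k j ≠ 0 := by
        intro h0
        have := hu1 k j hj
        rw [h0, norm_zero] at this
        norm_num at this
      have hne : gh j (x' k) + (Δ' k j).2 ≠ 0 := by
        rw [hsum]
        exact smul_ne_zero hpos.ne' hune
      rw [(hw1 k hk j hj).2 hne, hsum, unitv_smul_unit hpos (hu1 k j hj)]
    have heq : ∀ j, memI0 g0 gh xb j → wb' j = wb j := by
      intro j hj
      have t1 : Tendsto (fun k => w k j) (atTop ⊓ 𝓟 I) (𝓝 (wb j)) := by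
        refine Tendsto.congr' ?_ ((huconv j).mono_left inf_le_left)
        exact eventually_inf_principal.mpr
          (Eventually.of_forall (fun k hk => (hforce k hk j hj).symm))
      exact tendsto_nhds_unique ((hw2 j hj).2) t1
    obtain ⟨k₀, hk₀⟩ := hS.nonempty
    have h1' : ∀ j, j ∈ B → memIB g0 gh xb j := by
      have := h1 k₀; rwa [hJBk k₀ hk₀] at this
    have h2' : ∀ j, j ∈ M → memI0 g0 gh xb j := by
      have := h2 k₀; rwa [hJmk k₀ hk₀] at this
    have h3' : ∀ j, j ∈ P → memI0 g0 gh xb j := by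
      have := h3 k₀; rwa [hJpk k₀ hk₀] at this
    have hdep : linDepD g0 gh (fun j => j ∈ B) (fun j => j ∈ M) (fun j => j ∈ P) xb wb := by
      have := h4 k₀; rwa [hJBk k₀ hk₀, hJmk k₀ hk₀, hJpk k₀ hk₀] at this
    have hdep' : linDepD g0 gh (fun j => j ∈ B) (fun j => j ∈ M) (fun j => j ∈ P) xb wb' := by
      refine (linDepD_congr (fun j hj => ?_)).mp hdep
      exact (heq j (hj.elim (h2' j) (h3' j))).symm
    have hev := htrans (fun j => j ∈ B) (fun j => j ∈ M) (fun j => j ∈ P) h1' h2' h3' hdep'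
    have hev2 : ∀ᶠ k in atTop ⊓ 𝓟 I, k ∈ I :=
      eventually_inf_principal.mpr (Eventually.of_forall (fun k hk => hk))
    obtain ⟨k, hkdep, hkI⟩ := (hev.and hev2).exists
    have hcg : ∀ j, (j ∈ M) ∨ (j ∈ P) → w k j = w'' k j := by
      intro j hj
      have hj0 : memI0 g0 gh xb j := hj.elim (h2' j) (h3' j)
      rw [hforce k hkI j hj0]
      have hn1 : ‖w'' k j‖ = 1 := by
        have := h5 (ψ k)
        rw [hJmk (ψ k) (hψmem k), hJpk (ψ k) (hψmem k)] at this
        exact this j hj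
      simp only [hudef, if_pos hn1]
    have hfin : linDepD g0 gh (fun j => j ∈ B) (fun j => j ∈ M) (fun j => j ∈ P)
        (x' k) (w'' k) := (linDepD_congr hcg).mp hkdep
    have hbad := h6 (ψ k)
    rw [hJBk (ψ k) (hψmem k), hJmk (ψ k) (hψmem k), hJpk (ψ k) (hψmem k)] at hbad
    exact hbad hfin
  · -- backward direction
    intro hyp x Δ hx hΔ
    set e : (j : Fin q) → Evec (m j) := fun j =>
      EuclideanSpace.single (⟨0, hm j⟩ : Fin (m j)) (1 : ℝ) with he
    have hen : ∀ j, ‖e j‖ = 1 := fun j => by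
      simp [he, EuclideanSpace.norm_single]
    set w : ℕ → (j : Fin q) → Evec (m j) := fun k j =>
      if h : gh j (x k) + (Δ k j).2 = 0 then e j else unitv (gh j (x k) + (Δ k j).2) with hwdef
    have hwn : ∀ k j, ‖w k j‖ = 1 := by
      intro k j
      by_cases h : gh j (x k) + (Δ k j).2 = 0
      · simp only [hwdef, dif_pos h]; exact hen j
      · simp only [hwdef, dif_neg h]; exact norm_unitv h
    have hmem : ∀ k, w k ∈ Set.univ.pi (fun j => Metric.sphere (0 : Evec (m j)) 1) := by
      intro k
      rw [Set.mem_univ_pi]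
      intro j
      rw [mem_sphere_zero_iff_norm]
      exact hwn k j
    obtain ⟨wb, hwbmem, φ, hφ, hconv⟩ :=
      (isCompact_univ_pi (fun j => isCompact_sphere (0 : Evec (m j)) 1)).tendsto_subseq hmem
    have hwbn : ∀ j, ‖wb j‖ = 1 := by
      intro j
      have := Set.mem_univ_pi.mp hwbmem j
      rwa [mem_sphere_zero_iff_norm] at this
    have hcoord : ∀ j, Tendsto (fun k => w k j) (atTop ⊓ 𝓟 (Set.range φ)) (𝓝 (wb j)) := by
      intro j
      exact tendsto_inf_principal_range hφ (tendsto_pi_nhds.mp hconv j)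
    refine ⟨Set.range φ, w, wb, Set.infinite_range_of_injective hφ.injective, ⟨?_, ?_⟩, ?_⟩
    · intro k _ j _
      refine ⟨hwn k j, fun hne => ?_⟩
      simp only [hwdef, dif_neg hne]
    · intro j _
      exact ⟨hwbn j, hcoord j⟩
    · intro JB Jm Jp hB hM hP hdep
      obtain ⟨V, hV, hVprop⟩ := hyp wb (fun j _ => hwbn j)
      have htend : Tendsto (fun k => ((x k, w k) : Evec n × ((j : Fin q) → Evec (m j))))
          (atTop ⊓ 𝓟 (Set.range φ)) (𝓝 (xb, wb)) :=
        (hx.mono_left inf_le_left).prodMk_nhds (tendsto_pi_nhds.mpr hcoord)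
      filter_upwards [htend hV] with k hk
      exact hVprop JB Jm Jp hB hM hP hdep (x k, w k) hk (fun j _ => hwn k j)
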